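/- arXiv:2006.10403 — 2 statements merged into one kernel-verified Lean document; each statement's English description precedes it below -/
import Mathlib

section
/- Let w be a word of odd length in a free group, cyclically reduced, which is a palindrome: w = e_r⋯e₁·f·e₁⋯e_r (reading the same forwards and backwards). Suppose a cyclic permutation w' of w is also a palindrome, with w' ≠ w. Then this is impossible: the only cyclic permutation of w that is a palindrome is w itself. Equivalently, two distinct cyclically reduced palindromic words cannot be cyclic conjugates of each other when their common length is odd (and they are primitive, i.e. the bi-infinite periodic word ⋯ww⋯ has minimal period equal to the length of w). -/
/-!
Reversal turns a rotation by `k` into a rotation by `-k`. So if both `w` and its rotation by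
`k` are palindromes, rotating by `k` and by `-k` give the same word, i.e. `w` is fixed by the
rotation by `2k`. Primitivity forces `|w| ∣ 2k`, and as `|w|` is odd, `|w| ∣ k`.
-/

namespace List

variable {α : Type*}

theorem rotate_two_mul_eq_self_of_reverse_eq {l : List α} {k : ℕ} (hl : l.reverse = l)
    (hk : (l.rotate k).reverse = l.rotate k) : l.rotate (2 * k) = l := by
  rcases eq_or_ne l [] with rfl | hne
  · simp
  set n := l.length
  have hr : k % n ≤ n := (Nat.mod_lt k (length_pos_iff.2 hne)).le
  have hanti : l.rotate (k % n) = l.rotate (n - k % n) := by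
    rw [rotate_mod, ← hk, reverse_rotate, hl]
  calc l.rotate (2 * k) = l.rotate (k % n + k % n) := by
        rw [← rotate_mod, two_mul, Nat.add_mod, ← rotate_mod l (k % n + k % n)]
    _ = l.rotate (n - k % n + k % n) := by rw [← rotate_rotate, hanti, rotate_rotate]
    _ = l := by rw [Nat.sub_add_cancel hr, rotate_length]

theorem length_dvd_of_rotate_eq_self {l : List α} {m : ℕ} (hl : l ≠ [])
    (hprim : ∀ j, 0 < j → j < l.length → l.rotate j ≠ l) (hm : l.rotate m = l) :
    l.length ∣ m := by
  refine Nat.dvd_of_mod_eq_zero (by_contra fun hne => ?_)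
  exact hprim (m % l.length) (Nat.pos_of_ne_zero hne) (Nat.mod_lt m (length_pos_iff.2 hl))
    (by rw [rotate_mod, hm])

end List

/-- A palindromic word of odd length which is primitive (its bi-infinite
periodic extension has minimal period the length of the word) admits no other
palindromic cyclic permutation: if the rotation of `w` by `k < |w|` is again a
palindrome, then `k = 0`. -/
theorem palindrome_cyclic_perm_unique {α : Type*} (w : List α)
    (hodd : Odd w.length)
    (hpal : w.reverse = w)
    (hprim : ∀ j : ℕ, 0 < j → j < w.length → w.drop j ++ w.take j ≠ w)
    (k : ℕ) (hk : k < w.length)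
    (hpal' : (w.drop k ++ w.take k).reverse = w.drop k ++ w.take k) :
    k = 0 := by
  have hw : w ≠ [] := List.ne_nil_of_length_pos (by omega)
  have hprim' : ∀ j, 0 < j → j < w.length → w.rotate j ≠ w := fun j hj hjn => by
    rw [List.rotate_eq_drop_append_take hjn.le]
    exact hprim j hj hjn
  have h2k : w.rotate (2 * k) = w :=
    List.rotate_two_mul_eq_self_of_reverse_eq hpal
      (by rwa [List.rotate_eq_drop_append_take hk.le])
  have hdvd : w.length ∣ k := hodd.coprime_two_right.dvd_of_dvd_mul_left
    (List.length_dvd_of_rotate_eq_self hw hprim' h2k)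
  exact Nat.eq_zero_of_dvd_of_lt hdvd hk
end

section
/- Let T be a locally finite tree with each edge assigned an orientation, and let T_F be a finite nonempty subtree such that from every directed edge e not in T_F there is a directed path (following the assigned orientations head-to-tail) from e ending at an edge of T_F, and such that every directed edge not in T_F points toward T_F (i.e., lies on such a descending path). Suppose additionally there is a second orientation (W-arrows) on the edges such that every edge is connected by a strictly W-descending path to a fixed base edge e₀ ∈ T_F. If for some edge e outside a sufficiently large finite ball B ⊇ T_F the two orientations disagree, then following W-arrows backward from e stays in the wake of e (the component of T∖{e} containing the tail of e together with e), forcing the base edge e₀ to lie outside B — a contradiction. Hence outside some finite set of edges, the two orientations agree. -/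
/-!
Delete an edge `s(u, v)` lying outside a large finite set of edges `S`. Any descending path that
starts along `(u, v)` never returns through `s(u, v)` (orientations are asymmetric), so it ends
at an edge of `T_F` in the component of `v`. Choosing `S` to contain `T_F` and walks from all
vertices of `T_F` to the endpoint `a` of `e₀`, that component also contains `a`. Hence both
orientations point from `u` to `v` exactly when `v` lies on the side of `a`, and since the tree
has no cycle, `a` lies on only one side.
-/

namespace SimpleGraph

variable {V : Type*} {G : SimpleGraph V}

def HasDescentTo (D : V → V → Prop) (F : Set (Sym2 V)) (u v : V) : Prop :=
  ∃ (n : ℕ) (p : ℕ → V), p 0 = u ∧ p 1 = v ∧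
    (∀ i ≤ n, D (p i) (p (i + 1))) ∧ s(p n, p (n + 1)) ∈ F

lemma reachable_deleteEdges_of_descending {D : V → V → Prop}
    (hsupp : ∀ x y, D x y → G.Adj x y) (hasymm : ∀ x y, D x y → ¬ D y x)
    {n : ℕ} {p : ℕ → V} (hstep : ∀ i ≤ n, D (p i) (p (i + 1))) :
    ∀ i ≤ n, (G.deleteEdges {s(p 0, p 1)}).Reachable (p 1) (p (i + 1)) := by
  intro i
  induction i with
  | zero => exact fun _ => Reachable.refl _
  | succ j ih =>
    intro hj
    have hD := hstep (j + 1) hj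
    by_cases hedge : s(p (j + 1), p (j + 2)) = s(p 0, p 1)
    · rcases Sym2.eq_iff.mp hedge with ⟨-, h⟩ | ⟨h₁, h₀⟩
      · rw [h]
      · rw [h₁, h₀] at hD
        exact absurd hD (hasymm _ _ (hstep 0 (Nat.zero_le n)))
    · exact (ih (by omega)).trans
        (Adj.reachable ((deleteEdges_adj ..).mpr ⟨hsupp _ _ hD, hedge⟩))

lemma HasDescentTo.exists_reachable_deleteEdges {D : V → V → Prop} {F : Set (Sym2 V)} {u v : V}
    (hsupp : ∀ x y, D x y → G.Adj x y) (hasymm : ∀ x y, D x y → ¬ D y x)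
    (h : HasDescentTo D F u v) :
    ∃ f ∈ F, ∃ w ∈ f, (G.deleteEdges {s(u, v)}).Reachable v w := by
  obtain ⟨n, p, rfl, rfl, hstep, hF⟩ := h
  exact ⟨_, hF, p (n + 1), Sym2.mem_mk_right _ _,
    reachable_deleteEdges_of_descending hsupp hasymm hstep n le_rfl⟩

lemma Preconnected.exists_finite_forall_reachable_deleteEdges (hG : G.Preconnected)
    {X : Set V} (hX : X.Finite) (a : V) :
    ∃ S : Set (Sym2 V), S.Finite ∧ ∀ e ∉ S, ∀ x ∈ X, (G.deleteEdges {e}).Reachable x a := by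
  let walk : ∀ x, G.Walk x a := fun x => (hG x a).some
  refine ⟨⋃ x ∈ X, {e | e ∈ (walk x).edges},
    hX.biUnion fun x _ => (walk x).edges.finite_toSet, fun e he x hx => ?_⟩
  refine ⟨(walk x).toDeleteEdges {e} fun e' he' hee' => he ?_⟩
  rw [Set.mem_singleton_iff.mp hee'] at he'
  exact Set.mem_biUnion hx he'

lemma IsAcyclic.orientation_iff_reachable_deleteEdges (hG : G.IsAcyclic) {D : V → V → Prop}
    {u v a : V} (hadj : G.Adj u v) (hD : D u v ↔ ¬ D v u)
    (huv : D u v → (G.deleteEdges {s(u, v)}).Reachable v a)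
    (hvu : D v u → (G.deleteEdges {s(u, v)}).Reachable u a) :
    D u v ↔ (G.deleteEdges {s(u, v)}).Reachable v a := by
  refine ⟨huv, fun hva => by_contra fun hnot => ?_⟩
  exact isBridge_iff.mp (isAcyclic_iff_forall_adj_isBridge.mp hG hadj)
    ((hvu (not_imp_comm.mp hD.mpr hnot)).trans hva.symm)

end SimpleGraph

theorem orientations_agree_outside_finite_set_general {V : Type*} (G : SimpleGraph V)
    (hT : G.IsTree)
    (Tdir Wdir : V → V → Prop)
    (hTor : ∀ u v : V, G.Adj u v → (Tdir u v ↔ ¬ Tdir v u))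
    (hTsupp : ∀ u v : V, Tdir u v → G.Adj u v)
    (hWor : ∀ u v : V, G.Adj u v → (Wdir u v ↔ ¬ Wdir v u))
    (hWsupp : ∀ u v : V, Wdir u v → G.Adj u v)
    (TF : Set (Sym2 V))
    (hTFfin : TF.Finite)
    (a b : V) (he₀ : s(a, b) ∈ TF)
    (hTdesc : ∀ u v : V, Tdir u v → s(u, v) ∉ TF →
      ∃ (n : ℕ) (p : ℕ → V), p 0 = u ∧ p 1 = v ∧
        (∀ i ≤ n, Tdir (p i) (p (i + 1))) ∧ s(p n, p (n + 1)) ∈ TF)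
    (hWdesc : ∀ u v : V, Wdir u v →
      ∃ (n : ℕ) (p : ℕ → V), p 0 = u ∧ p 1 = v ∧
        (∀ i ≤ n, Wdir (p i) (p (i + 1))) ∧ s(p n, p (n + 1)) = s(a, b)) :
    ∃ S : Set (Sym2 V), S.Finite ∧
      ∀ u v : V, G.Adj u v → s(u, v) ∉ S → (Tdir u v ↔ Wdir u v) := by
  classical
  obtain ⟨S, hSfin, hS⟩ := hT.connected.preconnected.exists_finite_forall_reachable_deleteEdges
    (hTFfin.biUnion fun f _ => f.toFinset.finite_toSet) a
  have toward {D : V → V → Prop} (hsupp : ∀ x y, D x y → G.Adj x y)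
      (hor : ∀ x y, G.Adj x y → (D x y ↔ ¬ D y x))
      (hdesc : ∀ x y, D x y → s(x, y) ∉ TF → SimpleGraph.HasDescentTo D TF x y)
      ⦃x y : V⦄ (hxy : s(x, y) ∉ TF ∪ S) (hD : D x y) :
      (G.deleteEdges {s(x, y)}).Reachable y a := by
    obtain ⟨f, hf, w, hw, hyw⟩ := (hdesc x y hD fun h => hxy (.inl h)).exists_reachable_deleteEdges
      hsupp fun x y h => (hor x y (hsupp x y h)).mp h
    exact hyw.trans (hS _ (fun h => hxy (.inr h)) w
      (Set.mem_biUnion hf (Finset.mem_coe.mpr (Sym2.mem_toFinset.mpr hw))))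
  have hTtoward := toward hTsupp hTor hTdesc
  have hWtoward := toward hWsupp hWor fun x y hW _ => by
    obtain ⟨n, p, h0, h1, hstep, hend⟩ := hWdesc x y hW
    exact ⟨n, p, h0, h1, hstep, hend ▸ he₀⟩
  refine ⟨TF ∪ S, hTFfin.union hSfin, fun u v hadj huv => ?_⟩
  have hvu : s(v, u) ∉ TF ∪ S := Sym2.eq_swap (a := u) ▸ huv
  have hswap : G.deleteEdges {s(v, u)} = G.deleteEdges {s(u, v)} := by rw [Sym2.eq_swap]
  rw [hT.isAcyclic.orientation_iff_reachable_deleteEdges hadj (hTor u v hadj) (hTtoward huv)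
      (hswap ▸ hTtoward hvu),
    hT.isAcyclic.orientation_iff_reachable_deleteEdges hadj (hWor u v hadj) (hWtoward huv)
      (hswap ▸ hWtoward hvu)]

/-- In a locally finite tree with two edge-orientations (`T`-arrows and
`W`-arrows), if there is a finite nonempty attracting subtree `T_F` for the
`T`-orientation (every directed edge outside `T_F` admits a descending path to
`T_F`), and every edge has a `W`-descending path to a fixed base edge
`e₀ = s(a,b) ∈ T_F`, then outside some finite set of edges the two
orientations agree. -/
theorem orientations_agree_outside_finite_set {V : Type*} (G : SimpleGraph V)
    (hT : G.IsTree) (hlf : G.LocallyFinite)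
    (Tdir Wdir : V → V → Prop)
    (hTor : ∀ u v : V, G.Adj u v → (Tdir u v ↔ ¬ Tdir v u))
    (hTsupp : ∀ u v : V, Tdir u v → G.Adj u v)
    (hWor : ∀ u v : V, G.Adj u v → (Wdir u v ↔ ¬ Wdir v u))
    (hWsupp : ∀ u v : V, Wdir u v → G.Adj u v)
    (TF : Set (Sym2 V)) (hTFsub : TF ⊆ G.edgeSet)
    (hTFfin : TF.Finite) (hTFne : TF.Nonempty)
    (a b : V) (hab : G.Adj a b) (he₀ : s(a, b) ∈ TF)
    (hTdesc : ∀ u v : V, Tdir u v → s(u, v) ∉ TF →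
      ∃ (n : ℕ) (p : ℕ → V), p 0 = u ∧ p 1 = v ∧
        (∀ i ≤ n, Tdir (p i) (p (i + 1))) ∧ s(p n, p (n + 1)) ∈ TF)
    (hWdesc : ∀ u v : V, Wdir u v →
      ∃ (n : ℕ) (p : ℕ → V), p 0 = u ∧ p 1 = v ∧
        (∀ i ≤ n, Wdir (p i) (p (i + 1))) ∧ s(p n, p (n + 1)) = s(a, b)) :
    ∃ S : Set (Sym2 V), S.Finite ∧
      ∀ u v : V, G.Adj u v → s(u, v) ∉ S → (Tdir u v ↔ Wdir u v) :=
  orientations_agree_outside_finite_set_general G hT Tdir Wdir hTor hTsupp hWor hWsupp TF hTFfin a b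
    he₀ hTdesc hWdesc
end
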